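/- arXiv:1907.08865 — 2 statements merged into one kernel-verified Lean document; each statement's English description precedes it below -/
import Mathlib

section
/- Let $n > 1$. A vertex-colored graph $(G,\sigma)$ is an $(n-1)$-hc-cograph if and only if $(G+x,\sigma')$ is an $n$-hc-cograph, where $G+x$ is obtained from $G$ by adding a new vertex $x$ adjacent to all vertices of $G$, and $\sigma'(v) = \sigma(v)$ for all vertices $v$ of $G$ while $\sigma'(x) \neq \sigma(v)$ for all vertices $v$ of $G$ (i.e., $x$ receives a fresh color). -/
/-!
A vertex adjacent to all other vertices cannot lie in either part of a disjoint union (K3), so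
in any hc-cotree of `G + x` on at least two vertices the hub `x` is split off by joins (K2);
deleting it keeps every join valid, since disjointness of color sets survives shrinking, and
leaves an hc-cotree of `G`. Conversely `G + x` is the join of `x` with `G`, legal because the
color of `x` is fresh, and that fresh color raises the number of colors by exactly one.
-/

namespace RBMGPaper

variable {V : Type*} {C : Type*}

/-- `HCOn G σ A` asserts that the subgraph of the vertex-colored graph `(G, σ)` induced on the
vertex set `A` is a hierarchically colored cograph, built recursively via (K1)–(K3). -/
inductive HCOn (G : SimpleGraph V) (σ : V → C) : Set V → Prop
  | single (v : V) : HCOn G σ {v}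
  | join (A B : Set V) (hA : A.Nonempty) (hB : B.Nonempty) (hdisj : Disjoint A B)
      (hadj : ∀ a ∈ A, ∀ b ∈ B, G.Adj a b)
      (hcol : Disjoint (σ '' A) (σ '' B))
      (h1 : HCOn G σ A) (h2 : HCOn G σ B) : HCOn G σ (A ∪ B)
  | union (A B : Set V) (hA : A.Nonempty) (hB : B.Nonempty) (hdisj : Disjoint A B)
      (hadj : ∀ a ∈ A, ∀ b ∈ B, ¬ G.Adj a b)
      (hcol : σ '' A ⊆ σ '' B ∨ σ '' B ⊆ σ '' A)
      (h1 : HCOn G σ A) (h2 : HCOn G σ B) : HCOn G σ (A ∪ B)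

/-- `(G, σ)` is a hierarchically colored cograph (hc-cograph). -/
def IsHCCograph (G : SimpleGraph V) (σ : V → C) : Prop :=
  HCOn G σ Set.univ

/-- `CographOn G A` asserts that the subgraph of `G` induced on `A` is a cograph. -/
inductive CographOn (G : SimpleGraph V) : Set V → Prop
  | single (v : V) : CographOn G {v}
  | union (A B : Set V) (hA : A.Nonempty) (hB : B.Nonempty) (hdisj : Disjoint A B)
      (hadj : ∀ a ∈ A, ∀ b ∈ B, ¬ G.Adj a b)
      (h1 : CographOn G A) (h2 : CographOn G B) : CographOn G (A ∪ B)
  | join (A B : Set V) (hA : A.Nonempty) (hB : B.Nonempty) (hdisj : Disjoint A B)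
      (hadj : ∀ a ∈ A, ∀ b ∈ B, G.Adj a b)
      (h1 : CographOn G A) (h2 : CographOn G B) : CographOn G (A ∪ B)

/-- `G` is a cograph. -/
def IsCograph (G : SimpleGraph V) : Prop := CographOn G Set.univ

/-- The set `s` induces a biclique (complete bipartite graph, possibly `K₁`) in `G`. -/
def IsBiclique (G : SimpleGraph V) (s : Set V) : Prop :=
  ∃ A B : Set V, s = A ∪ B ∧ Disjoint A B ∧
    ∀ u ∈ s, ∀ v ∈ s, (G.Adj u v ↔ ((u ∈ A ∧ v ∈ B) ∨ (u ∈ B ∧ v ∈ A)))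

/-- `G` is a bicluster graph: every connected component is a biclique. -/
def IsBiclusterGraph (G : SimpleGraph V) : Prop :=
  ∀ c : G.ConnectedComponent, IsBiclique G c.supp

/-- `addHub G` is the graph `G + x`: a new vertex (`none`) adjacent to all vertices of `G`. -/
def addHub (G : SimpleGraph V) : SimpleGraph (Option V) where
  Adj u v :=
    (∃ a b, u = some a ∧ v = some b ∧ G.Adj a b) ∨
    (u = none ∧ ∃ b, v = some b) ∨ ((∃ a, u = some a) ∧ v = none)
  symm := by
    constructor
    rintro u v (⟨a, b, rfl, rfl, h⟩ | ⟨rfl, b, rfl⟩ | ⟨⟨a, rfl⟩, rfl⟩)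
    · exact Or.inl ⟨b, a, rfl, rfl, h.symm⟩
    · exact Or.inr (Or.inr ⟨⟨b, rfl⟩, rfl⟩)
    · exact Or.inr (Or.inl ⟨rfl, a, rfl⟩)
  loopless := by
    constructor
    rintro u (⟨a, b, rfl, hb, h⟩ | ⟨rfl, b, hb⟩ | ⟨⟨a, rfl⟩, hb⟩)
    · exact G.irrefl (Option.some_injective V hb ▸ h)
    · cases hb
    · cases hb

section HCOn

variable {W : Type*} {G : SimpleGraph V} {σ : V → C}

theorem HCOn.nonempty {A : Set V} (h : HCOn G σ A) : A.Nonempty := by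
  cases h with
  | single v => exact Set.singleton_nonempty v
  | join A B hA => exact hA.mono Set.subset_union_left
  | union A B hA => exact hA.mono Set.subset_union_left

theorem HCOn.image {H : SimpleGraph W} {τ : W → C} (e : G ↪g H) (hτ : τ ∘ e = σ) {A : Set V}
    (h : HCOn G σ A) : HCOn H τ (e '' A) := by
  have hcol (A : Set V) : τ '' (e '' A) = σ '' A := by rw [← Set.image_comp, hτ]
  induction h with
  | single v => rw [Set.image_singleton]; exact .single _
  | join A B hA hB hdisj hadj hc _ _ ihA ihB =>
    rw [Set.image_union]
    refine .join _ _ (hA.image e) (hB.image e) (Set.disjoint_image_of_injective e.injective hdisj)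
      ?_ (by rwa [hcol, hcol]) ihA ihB
    rintro _ ⟨a, ha, rfl⟩ _ ⟨b, hb, rfl⟩
    exact e.map_adj_iff.2 (hadj a ha b hb)
  | union A B hA hB hdisj hadj hc _ _ ihA ihB =>
    rw [Set.image_union]
    refine .union _ _ (hA.image e) (hB.image e) (Set.disjoint_image_of_injective e.injective hdisj)
      ?_ (by rwa [hcol, hcol]) ihA ihB
    rintro _ ⟨a, ha, rfl⟩ _ ⟨b, hb, rfl⟩
    exact mt e.map_adj_iff.1 (hadj a ha b hb)

theorem HCOn.preimage {H : SimpleGraph W} {τ : W → C} (e : G ↪g H) (hτ : τ ∘ e = σ)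
    {S : Set W} (h : HCOn H τ S) (hS : S ⊆ Set.range e) : HCOn G σ (e ⁻¹' S) := by
  have hcol (S : Set W) (hS : S ⊆ Set.range e) : σ '' (e ⁻¹' S) = τ '' S := by
    rw [← hτ, Set.image_comp, Set.image_preimage_eq_of_subset hS]
  induction h with
  | single w =>
    obtain ⟨v, rfl⟩ := hS rfl
    rw [← Set.image_singleton, Set.preimage_image_eq _ e.injective]
    exact .single v
  | join A B hA hB hdisj hadj hc _ _ ihA ihB =>
    have hA' := Set.subset_union_left.trans hS
    have hB' := Set.subset_union_right.trans hS
    rw [Set.preimage_union]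
    exact .join _ _ (hA.preimage' hA') (hB.preimage' hB') (hdisj.preimage e)
      (fun a ha b hb => e.map_adj_iff.1 (hadj _ ha _ hb)) (by rwa [hcol A hA', hcol B hB'])
      (ihA hA') (ihB hB')
  | union A B hA hB hdisj hadj hc _ _ ihA ihB =>
    have hA' := Set.subset_union_left.trans hS
    have hB' := Set.subset_union_right.trans hS
    rw [Set.preimage_union]
    exact .union _ _ (hA.preimage' hA') (hB.preimage' hB') (hdisj.preimage e)
      (fun a ha b hb => mt e.map_adj_iff.2 (hadj _ ha _ hb)) (by rwa [hcol A hA', hcol B hB'])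
      (ihA hA') (ihB hB')

theorem HCOn.insert {x : V} {S : Set V} (h : HCOn G σ S) (hx : x ∉ S)
    (hadj : ∀ y ∈ S, G.Adj x y) (hσx : σ x ∉ σ '' S) : HCOn G σ (insert x S) := by
  rw [Set.insert_eq]
  refine .join _ _ (Set.singleton_nonempty x) h.nonempty (Set.disjoint_singleton_left.2 hx)
    (by simpa using hadj) ?_ (.single x) h
  rwa [Set.image_singleton, Set.disjoint_singleton_left]

theorem HCOn.diff_singleton {x : V} {S : Set V} (h : HCOn G σ S)
    (hadj : ∀ y ∈ S \ {x}, G.Adj x y) (hne : (S \ {x}).Nonempty) : HCOn G σ (S \ {x}) := by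
  induction h with
  | single v =>
    have hxv : x ∉ ({v} : Set V) := by rintro rfl; simp at hne
    rw [Set.sdiff_singleton_eq_self hxv]
    exact .single v
  | join A B hA hB hdisj hadjAB hcol _ _ ihA ihB =>
    have hadjA : ∀ y ∈ A \ {x}, G.Adj x y := fun y hy => hadj y ⟨.inl hy.1, hy.2⟩
    have hadjB : ∀ y ∈ B \ {x}, G.Adj x y := fun y hy => hadj y ⟨.inr hy.1, hy.2⟩
    rw [Set.union_sdiff_distrib] at hne ⊢
    rcases (A \ {x}).eq_empty_or_nonempty with hA' | hA'
    · rw [hA', Set.empty_union] at hne ⊢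
      exact ihB hadjB hne
    rcases (B \ {x}).eq_empty_or_nonempty with hB' | hB'
    · rw [hB', Set.union_empty] at hne ⊢
      exact ihA hadjA hne
    exact .join _ _ hA' hB' (hdisj.mono Set.sdiff_subset Set.sdiff_subset)
      (fun a ha b hb => hadjAB a ha.1 b hb.1)
      (hcol.mono (Set.image_mono Set.sdiff_subset) (Set.image_mono Set.sdiff_subset))
      (ihA hadjA hA') (ihB hadjB hB')
  | union A B hA hB hdisj hadjAB hcol hAh hBh =>
    suffices x ∉ A ∪ B by
      rw [Set.sdiff_singleton_eq_self this]
      exact .union A B hA hB hdisj hadjAB hcol hAh hBh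
    rintro (hxA | hxB)
    · obtain ⟨b, hb⟩ := hB
      exact hadjAB x hxA b hb (hadj b ⟨.inr hb, (hdisj.ne_of_mem hxA hb).symm⟩)
    · obtain ⟨a, ha⟩ := hA
      exact hadjAB a ha x hxB (hadj a ⟨.inl ha, hdisj.ne_of_mem ha hxB⟩).symm

end HCOn

section AddHub

variable {G : SimpleGraph V} {σ : V → C}

def embeddingAddHub (G : SimpleGraph V) : G ↪g addHub G :=
  ⟨Function.Embedding.some, by simp [addHub]⟩

theorem addHub_adj_none_some (v : V) : (addHub G).Adj none (some v) :=
  .inr (.inl ⟨rfl, v, rfl⟩)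

theorem isHCCograph_addHub_iff [Nonempty V] {c₀ : C} (hc₀ : c₀ ∉ Set.range σ) :
    IsHCCograph (addHub G) (fun u => u.elim c₀ σ) ↔ IsHCCograph G σ := by
  have hτ : (fun u : Option V => u.elim c₀ σ) ∘ embeddingAddHub G = σ := rfl
  constructor
  · intro h
    have hhub : ∀ u ∈ Set.univ \ {none}, (addHub G).Adj none u := by
      rintro (_ | v) ⟨-, hv⟩
      exacts [absurd rfl hv, addHub_adj_none_some v]
    have hne : (Set.univ \ {none} : Set (Option V)).Nonempty :=
      ⟨some (Classical.arbitrary V), by simp⟩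
    have h' := h.diff_singleton hhub hne
    have hrange : Set.univ \ {none} = Set.range (embeddingAddHub G) := by
      ext (_ | v) <;> simp [embeddingAddHub]
    rw [hrange] at h'
    simpa [IsHCCograph] using h'.preimage _ hτ subset_rfl
  · intro h
    have h' := (h.image (embeddingAddHub G) hτ).insert (x := none) (by simp [embeddingAddHub])
      (by simp [embeddingAddHub, addHub_adj_none_some]) (by simpa [embeddingAddHub] using hc₀)
    have hrange : insert none (Set.range (embeddingAddHub G)) = Set.univ := by
      ext (_ | v) <;> simp [embeddingAddHub]
    rwa [Set.image_univ, hrange] at h'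

end AddHub

theorem ncard_insert_eq_add_one_iff {α : Type*} {s : Set α} {a : α} (ha : a ∉ s) {m : ℕ}
    (hm : m ≠ 0) : (insert a s).ncard = m + 1 ↔ s.ncard = m := by
  rcases s.finite_or_infinite with hs | hs
  · rw [Set.ncard_insert_of_notMem ha hs]
    omega
  · rw [hs.ncard, (hs.mono (Set.subset_insert a s)).ncard]
    omega

theorem hcCograph_iff_addHub_hcCograph_general (n : ℕ) (hn : 1 < n)
    (G : SimpleGraph V) (σ : V → C) (c₀ : C) (hc₀ : c₀ ∉ Set.range σ) :
    (IsHCCograph G σ ∧ (Set.range σ).ncard = n - 1) ↔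
      (IsHCCograph (addHub G) (fun u => u.elim c₀ σ) ∧
        (Set.range (fun u : Option V => u.elim c₀ σ)).ncard = n) := by
  obtain ⟨m, rfl⟩ : ∃ m, n = m + 1 := ⟨n - 1, by omega⟩
  have hm : m ≠ 0 := by omega
  rw [Option.range_elim, ncard_insert_eq_add_one_iff hc₀ hm, Nat.add_sub_cancel]
  refine and_congr_left fun hcard => ?_
  have : Nonempty V :=
    Set.range_nonempty_iff_nonempty.1 (Set.nonempty_of_ncard_ne_zero (hcard ▸ hm))
  exact (isHCCograph_addHub_iff hc₀).symm

/-- Let `n > 1`.  Then `(G, σ)` is an `(n-1)`-hc-cograph if and only if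
`(G + x, σ')` is an `n`-hc-cograph, where `G + x` adds a new hub-vertex `x` (here `none`) and
`σ'` extends `σ` by giving `x` a fresh color `c₀ ∉ range σ`. -/
theorem hcCograph_iff_addHub_hcCograph [Fintype V] (n : ℕ) (hn : 1 < n)
    (G : SimpleGraph V) (σ : V → C) (c₀ : C) (hc₀ : c₀ ∉ Set.range σ) :
    (IsHCCograph G σ ∧ (Set.range σ).ncard = n - 1) ↔
      (IsHCCograph (addHub G) (fun u => u.elim c₀ σ) ∧
        (Set.range (fun u : Option V => u.elim c₀ σ)).ncard = n) :=
  hcCograph_iff_addHub_hcCograph_general n hn G σ c₀ hc₀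

end RBMGPaper
end

section
/- Let $G = (V,E)$ be a bipartite graph with bipartition $V_1 \mathbin{\dot\cup} V_2$, and let $F$ be the set of all nonadjacent unordered pairs $\{u,v\}$ with $u \in V_1$, $v \in V_2$ such that $u$ and $v$ lie in the same connected component of $G$. Then the graph $G \cup F$ obtained by adding all pairs in $F$ as edges is a bicluster graph, and every set $F'$ of unordered pairs from $V_1 \otimes V_2$ disjoint from $E$ such that $G \cup F'$ is a bicluster graph satisfies $F \subseteq F'$; hence $F$ is the unique minimum-cardinality bicluster completion set of $G$. -/
namespace SimpleGraph

variable {V : Type*} {G H : SimpleGraph V} {s t : Set V} {u v : V}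

theorem IsBipartiteWith.mem_iff_notMem_of_adj (hG : G.IsBipartiteWith s t) {x y : V}
    (hxy : G.Adj x y) : x ∈ s ↔ y ∉ s := by
  have := hG.disjoint.notMem_of_mem_left (a := x)
  have := hG.disjoint.notMem_of_mem_left (a := y)
  rcases hG.mem_of_adj hxy with ⟨hx, hy⟩ | ⟨hx, hy⟩ <;> tauto

/-- Two proper 2-colourings of a connected graph either agree everywhere or disagree everywhere. -/
theorem Reachable.mem_iff_mem_of_adj_flip (hs : ∀ ⦃x y⦄, G.Adj x y → (x ∈ s ↔ y ∉ s))
    (ht : ∀ ⦃x y⦄, G.Adj x y → (x ∈ t ↔ y ∉ t)) (huv : G.Reachable u v) :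
    (u ∈ s ↔ u ∈ t) ↔ (v ∈ s ↔ v ∈ t) := by
  obtain ⟨p⟩ := huv
  induction p with
  | nil => rfl
  | cons hxy _ ih => rw [hs hxy, ht hxy, not_iff_not, ih]

theorem reachable_le_of_adj_le_reachable (h : H.Adj ≤ G.Reachable) :
    H.Reachable ≤ G.Reachable := by
  intro u v huv
  rw [reachable_iff_reflTransGen] at huv ⊢
  exact huv.lift' id fun x y hxy => (reachable_iff_reflTransGen x y).1 (h x y hxy)

end SimpleGraph

namespace RBMGPaper

open SimpleGraph Set

variable {V : Type*} {G H : SimpleGraph V} {s t : Set V} {u v : V}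

theorem isBiclusterGraph_iff :
    IsBiclusterGraph H ↔
      ∃ A : Set V, ∀ u v, H.Reachable u v → (H.Adj u v ↔ (u ∈ A ↔ v ∉ A)) := by
  constructor
  · intro h
    choose A B hsupp hdisj hadj using h
    refine ⟨{x | x ∈ A (H.connectedComponentMk x)}, fun u v huv => ?_⟩
    set c := H.connectedComponentMk u
    have hvc : H.connectedComponentMk v = c := (ConnectedComponent.eq.2 huv).symm
    have hv : v ∈ c.supp := hvc
    have hB : ∀ x ∈ c.supp, x ∈ B c ↔ x ∉ A c := fun x hx =>
      ⟨fun hxB hxA => (hdisj c).notMem_of_mem_left hxA hxB,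
        fun hxA => ((hsupp c ▸ hx : x ∈ A c ∪ B c)).resolve_left hxA⟩
    simp only [mem_ofPred_eq, hvc]
    rw [hadj c u rfl v hv, hB u rfl, hB v hv]
    tauto
  · rintro ⟨A, hA⟩ c
    refine ⟨c.supp ∩ A, c.supp \ A, (inter_union_sdiff _ _).symm, disjoint_sdiff_inter.symm,
      fun u hu v hv => ?_⟩
    rw [hA u v (ConnectedComponent.exact (hu.trans hv.symm))]
    simp only [mem_inter_iff, mem_sdiff, hu, hv, true_and]
    tauto

def biclusterCompletionSet (G : SimpleGraph V) (s t : Set V) : Set (Sym2 V) :=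
  {e | ∃ u ∈ s, ∃ v ∈ t, e = s(u, v) ∧ ¬ G.Adj u v ∧ G.Reachable u v}

theorem adj_fromEdgeSet_biclusterCompletionSet_iff (hG : G.IsBipartiteWith s t) :
    (fromEdgeSet (G.edgeSet ∪ biclusterCompletionSet G s t)).Adj u v ↔
      G.Reachable u v ∧ (u ∈ s ∧ v ∈ t ∨ u ∈ t ∧ v ∈ s) := by
  have hne : ∀ ⦃x y⦄, x ∈ s → y ∈ t → x ≠ y := fun x y hx hy hxy =>
    hG.disjoint.notMem_of_mem_left hx (hxy ▸ hy)
  rw [fromEdgeSet_adj]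
  constructor
  · rintro ⟨hG' | ⟨x, hx, y, hy, he, -, hxy⟩, -⟩
    · exact ⟨Adj.reachable hG', hG.mem_of_adj hG'⟩
    · rcases Sym2.eq_iff.mp he with ⟨rfl, rfl⟩ | ⟨rfl, rfl⟩
      exacts [⟨hxy, .inl ⟨hx, hy⟩⟩, ⟨hxy.symm, .inr ⟨hy, hx⟩⟩]
  · rintro ⟨huv, ⟨hu, hv⟩ | ⟨hu, hv⟩⟩
    · refine ⟨?_, hne hu hv⟩
      by_cases hadj : G.Adj u v
      · exact .inl hadj
      · exact .inr ⟨u, hu, v, hv, rfl, hadj, huv⟩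
    · refine ⟨?_, (hne hv hu).symm⟩
      by_cases hadj : G.Adj u v
      · exact .inl hadj
      · exact .inr ⟨v, hv, u, hu, Sym2.eq_swap, fun h => hadj h.symm, huv.symm⟩

theorem isBiclusterGraph_fromEdgeSet_biclusterCompletionSet (hG : G.IsBipartiteWith s sᶜ) :
    IsBiclusterGraph (fromEdgeSet (G.edgeSet ∪ biclusterCompletionSet G s sᶜ)) := by
  have hadj := fun u v => adj_fromEdgeSet_biclusterCompletionSet_iff (u := u) (v := v) hG
  refine isBiclusterGraph_iff.2 ⟨s, fun u v huv => ?_⟩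
  have hreach : G.Reachable u v :=
    reachable_le_of_adj_le_reachable (fun x y hxy => ((hadj x y).1 hxy).1) u v huv
  rw [hadj, mem_compl_iff, mem_compl_iff]
  tauto

theorem IsBiclusterGraph.adj_of_reachable (hH : IsBiclusterGraph H) (hGH : G ≤ H)
    (hG : G.IsBipartiteWith s t) (huv : G.Reachable u v) (hu : u ∈ s) (hv : v ∈ t) :
    H.Adj u v := by
  obtain ⟨A, hA⟩ := isBiclusterGraph_iff.1 hH
  have hGA : ∀ ⦃x y⦄, G.Adj x y → (x ∈ A ↔ y ∉ A) := fun x y hxy =>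
    (hA x y (hGH hxy).reachable).1 (hGH hxy)
  have hvs : v ∉ s := hG.disjoint.notMem_of_mem_right hv
  have := huv.mem_iff_mem_of_adj_flip (fun _ _ => hG.mem_iff_notMem_of_adj) hGA
  rw [hA u v (huv.mono hGH)]
  tauto

theorem biclusterCompletionSet_subset (hG : G.IsBipartiteWith s t) {F' : Set (Sym2 V)}
    (hF' : IsBiclusterGraph (fromEdgeSet (G.edgeSet ∪ F'))) :
    biclusterCompletionSet G s t ⊆ F' := by
  rintro _ ⟨u, hu, v, hv, rfl, hnadj, huv⟩
  have hGH : G ≤ fromEdgeSet (G.edgeSet ∪ F') := (le_fromEdgeSet_iff _ _).2 subset_union_left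
  obtain ⟨huvE | huvF', -⟩ := (fromEdgeSet_adj _).1 (hF'.adj_of_reachable hGH hG huv hu hv)
  exacts [absurd huvE hnadj, huvF']

/-- Let `G` be a bipartite graph with bipartition `V1 ∪ V2` and let `F` be the
set of all nonadjacent cross pairs lying in a common connected component of `G`.  Then `G ∪ F`
is a bicluster graph, every cross-pair completion set `F'` (disjoint from the edges) with
`G ∪ F'` a bicluster graph satisfies `F ⊆ F'`, and `F` is the unique minimum-cardinality
bicluster completion set of `G`. -/
theorem bicluster_completion [Fintype V] (G : SimpleGraph V) (V1 V2 : Set V)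
    (hpart : V1 ∪ V2 = Set.univ) (hdisj : Disjoint V1 V2)
    (hbip : ∀ u v : V, G.Adj u v → (u ∈ V1 ∧ v ∈ V2) ∨ (u ∈ V2 ∧ v ∈ V1))
    (F : Set (Sym2 V))
    (hF : F = {e : Sym2 V | ∃ u ∈ V1, ∃ v ∈ V2,
      e = s(u, v) ∧ ¬ G.Adj u v ∧ G.Reachable u v}) :
    IsBiclusterGraph (SimpleGraph.fromEdgeSet (G.edgeSet ∪ F)) ∧
    (∀ F' : Set (Sym2 V),
      (∀ e ∈ F', (∃ u ∈ V1, ∃ v ∈ V2, e = s(u, v)) ∧ e ∉ G.edgeSet) →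
      IsBiclusterGraph (SimpleGraph.fromEdgeSet (G.edgeSet ∪ F')) → F ⊆ F') ∧
    (∀ F' : Set (Sym2 V),
      (∀ e ∈ F', (∃ u ∈ V1, ∃ v ∈ V2, e = s(u, v)) ∧ e ∉ G.edgeSet) →
      IsBiclusterGraph (SimpleGraph.fromEdgeSet (G.edgeSet ∪ F')) →
      F'.ncard ≤ F.ncard → F' = F) := by
  obtain rfl : V2 = V1ᶜ := (compl_eq_iff_isCompl.2 ⟨hdisj, codisjoint_iff.2 hpart⟩).symm
  have hG : G.IsBipartiteWith V1 V1ᶜ := ⟨hdisj, hbip⟩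
  subst hF
  have hmin : ∀ F' : Set (Sym2 V), IsBiclusterGraph (fromEdgeSet (G.edgeSet ∪ F')) →
      biclusterCompletionSet G V1 V1ᶜ ⊆ F' := fun _ => biclusterCompletionSet_subset hG
  refine ⟨isBiclusterGraph_fromEdgeSet_biclusterCompletionSet hG, fun F' _ => hmin F',
    fun F' _ hF' hcard => ?_⟩
  exact (eq_of_subset_of_ncard_le (hmin F' hF') hcard F'.toFinite).symm

end RBMGPaper
end
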